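/- arXiv:2503.17300 — 5 statements merged into one kernel-verified Lean document; each statement's English description precedes it below -/
import Mathlib

section
/- Let X be a random vector in ℝ^d, ‖·‖ a norm with dual norm ‖·‖_*, and P₀ a probability measure on ℝ^d with U ~ P₀ independent of X. Define M_X(u,p) = E[|⟨u,X⟩|^p] and ν(P₀) = sup over x with ‖x‖=1 of 1/P₀(|⟨U,x⟩| ≥ 1). Then for every p ≥ 1, E[‖X‖^p] ≤ E_{U~P₀}[M_X(U,p)] · ν(P₀), provided the relevant moments are finite (e.g., ‖X‖ has finite moments of every order). -/
open MeasureTheory Real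
open scoped RealInnerProductSpace

/-- Main lemma, moment form: `E[‖X‖^p] ≤ E_{U~P₀}[M_X(U,p)] · ν(P₀)`,
where the norm is given by a seminorm `N` that is a genuine norm, and
`ν` is any (finite) bound with `1 ≤ ν · P₀(|⟨U,x⟩| ≥ 1)` for all `x` on the
unit sphere of `N` (i.e. `ν ≥ sup_{N x = 1} 1/P₀(|⟨U,x⟩| ≥ 1)`). -/
theorem stmt_0 {d : ℕ} {Ω : Type*} [MeasurableSpace Ω]
    (μ : Measure Ω) [IsProbabilityMeasure μ]
    (X : Ω → EuclideanSpace ℝ (Fin d)) (hX : Measurable X)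
    (P₀ : Measure (EuclideanSpace ℝ (Fin d))) [IsProbabilityMeasure P₀]
    (N : Seminorm ℝ (EuclideanSpace ℝ (Fin d)))
    (hNdef : ∀ x, N x = 0 → x = 0)
    (p : ℝ) (hp : 1 ≤ p)
    (ν : ℝ)
    (hν : ∀ x : EuclideanSpace ℝ (Fin d), N x = 1 →
      1 ≤ ν * (P₀ {u | 1 ≤ |⟪u, x⟫|}).toReal)
    (hXmom : ∀ q : ℝ, Integrable (fun ω => (N (X ω)) ^ q) μ)
    (hFub : Integrable
      (fun z : EuclideanSpace ℝ (Fin d) × Ω => |⟪z.1, X z.2⟫| ^ p)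
      (P₀.prod μ)) :
    ∫ ω, (N (X ω)) ^ p ∂μ ≤
      (∫ u, ∫ ω, |⟪u, X ω⟫| ^ p ∂μ ∂P₀) * ν := by
  have hp0 : 0 < p := lt_of_lt_of_le one_pos hp
  rcases Nat.eq_zero_or_pos d with hd | hd
  · subst hd
    have hX0 : ∀ ω, X ω = 0 := fun ω => Subsingleton.elim _ _
    simp_rw [hX0, map_zero, inner_zero_right, abs_zero, Real.zero_rpow hp0.ne',
      integral_zero, zero_mul]
    exact le_refl 0
  -- ν ≥ 0
  have hν0 : 0 ≤ ν := by
    set e : EuclideanSpace ℝ (Fin d) := EuclideanSpace.single ⟨0, hd⟩ 1 with he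
    have he0 : e ≠ 0 := by
      intro h
      have h1 : e ⟨0, hd⟩ = (0 : ℝ) := by rw [h]; rfl
      rw [he, EuclideanSpace.single_apply, if_pos rfl] at h1
      exact one_ne_zero h1
    have hNe : 0 < N e := by
      rcases lt_or_eq_of_le (apply_nonneg N e) with h | h
      · exact h
      · exact absurd (hNdef e h.symm) he0
    have hNy : N ((N e)⁻¹ • e) = 1 := by
      rw [map_smul_eq_mul, Real.norm_eq_abs, abs_of_pos (inv_pos.mpr hNe)]
      field_simp
    have h1 := hν _ hNy
    have h2 : (0:ℝ) ≤ (P₀ {u | 1 ≤ |⟪u, (N e)⁻¹ • e⟫|}).toReal := ENNReal.toReal_nonneg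
    nlinarith
  -- key pointwise lemma
  have key : ∀ x : EuclideanSpace ℝ (Fin d),
      Integrable (fun u => |⟪u, x⟫| ^ p) P₀ →
      N x ^ p ≤ ν * ∫ u, |⟪u, x⟫| ^ p ∂P₀ := by
    intro x hint
    rcases eq_or_ne x 0 with rfl | hx
    · simp [Real.zero_rpow hp0.ne', mul_comm]
    · have hc : 0 < N x := by
        rcases lt_or_eq_of_le (apply_nonneg N x) with h | h
        · exact h
        · exact absurd (hNdef x h.symm) hx
      set c := N x with hcdef
      set y : EuclideanSpace ℝ (Fin d) := c⁻¹ • x with hy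
      have hNy : N y = 1 := by
        rw [hy, map_smul_eq_mul, Real.norm_eq_abs, abs_of_pos (inv_pos.mpr hc)]
        field_simp
        exact hcdef.symm
      have hSmeas : MeasurableSet {u : EuclideanSpace ℝ (Fin d) | 1 ≤ |⟪u, y⟫|} := by
        have : Continuous fun u : EuclideanSpace ℝ (Fin d) => |⟪u, y⟫| :=
          (continuous_id.inner continuous_const).abs
        exact measurableSet_le measurable_const this.measurable
      set S := {u : EuclideanSpace ℝ (Fin d) | 1 ≤ |⟪u, y⟫|} with hS
      have h1 : 1 ≤ ν * (P₀ S).toReal := hν y hNy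
      -- c^p * P₀(S) ≤ ∫ |⟪u,x⟫|^p
      have hbound : c ^ p * (P₀ S).toReal ≤ ∫ u, |⟪u, x⟫| ^ p ∂P₀ := by
        have h2 : ∫ u in S, c ^ p ∂P₀ ≤ ∫ u in S, |⟪u, x⟫| ^ p ∂P₀ := by
          apply setIntegral_mono_on (integrableOn_const (measure_ne_top _ _))
            (hint.restrict) hSmeas
          intro u hu
          have hux : |⟪u, x⟫| = c * |⟪u, y⟫| := by
            rw [hy]
            rw [real_inner_smul_right, abs_mul, abs_of_pos (inv_pos.mpr hc)]
            field_simp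
          have : c ≤ |⟪u, x⟫| := by
            rw [hux]
            nlinarith [hu.out, hc]
          exact Real.rpow_le_rpow hc.le this hp0.le
        have h3 : ∫ u in S, |⟪u, x⟫| ^ p ∂P₀ ≤ ∫ u, |⟪u, x⟫| ^ p ∂P₀ := by
          apply setIntegral_le_integral hint
          filter_upwards with u
          positivity
        calc c ^ p * (P₀ S).toReal = ∫ u in S, c ^ p ∂P₀ := by
              rw [setIntegral_const, smul_eq_mul, measureReal_def]; ring
          _ ≤ _ := le_trans h2 h3
      calc c ^ p = c ^ p * 1 := by ring
        _ ≤ c ^ p * (ν * (P₀ S).toReal) := by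
            apply mul_le_mul_of_nonneg_left h1 (by positivity)
        _ = ν * (c ^ p * (P₀ S).toReal) := by ring
        _ ≤ ν * ∫ u, |⟪u, x⟫| ^ p ∂P₀ := mul_le_mul_of_nonneg_left hbound hν0
  -- a.e. integrability in u
  have hae : ∀ᵐ ω ∂μ, Integrable (fun u => |⟪u, X ω⟫| ^ p) P₀ :=
    hFub.swap.prod_right_ae
  have hRHSint : Integrable (fun ω => ∫ u, |⟪u, X ω⟫| ^ p ∂P₀) μ :=
    hFub.swap.integral_prod_left
  have step1 : ∫ ω, (N (X ω)) ^ p ∂μ ≤ ∫ ω, ν * ∫ u, |⟪u, X ω⟫| ^ p ∂P₀ ∂μ := by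
    apply integral_mono_ae (hXmom p) (hRHSint.const_mul ν)
    filter_upwards [hae] with ω hω
    exact key (X ω) hω
  rw [integral_const_mul] at step1
  have swap : ∫ ω, ∫ u, |⟪u, X ω⟫| ^ p ∂P₀ ∂μ = ∫ u, ∫ ω, |⟪u, X ω⟫| ^ p ∂μ ∂P₀ :=
    (integral_integral_swap hFub).symm
  rw [swap] at step1
  linarith
end

section
/- Let g be a standard Gaussian random variable and Φ its cumulative distribution function. Then for all z ≥ 0, Φ(−z) ≥ e^{−2z²/3}/4. -/
open MeasureTheory ProbabilityTheory Real Set Filter Topology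

/-!
By symmetry `Φ(-z) = ∫_z^∞ φ`. The density `φ x = e^{-x²/2}/√(2π)` dominates
`x e^{-2x²/3}/3 = d/dx (-e^{-2x²/3}/4)` on all of `ℝ`: after dividing by `e^{-2x²/3}` this is
`√(2π) x ≤ 3 e^{x²/6}`, whose square follows from `e t ≤ e^t` and `2π < 3e`.
Integrating over `(z, ∞)` gives the bound.
-/

lemma two_pi_mul_le_three_exp {t : ℝ} (ht : 0 ≤ t) : 2 * π * t ≤ 3 * exp t := by
  have h_exp : exp 1 * t ≤ exp t := by
    have := add_one_le_exp (t - 1)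
    rw [exp_sub, le_div_iff₀ (exp_pos 1)] at this
    linarith
  nlinarith [pi_lt_d2, exp_one_gt_d9]

lemma mul_exp_le_gaussianPDFReal (x : ℝ) :
    x * exp (-(2 / 3) * x ^ 2) / 3 ≤ gaussianPDFReal 0 1 x := by
  have h_split : exp (-x ^ 2 / 2) = exp (x ^ 2 / 6) * exp (-(2 / 3) * x ^ 2) := by
    rw [← exp_add]; ring_nf
  have h_sq : exp (x ^ 2 / 3) = exp (x ^ 2 / 6) ^ 2 := by
    rw [← exp_nat_mul]; ring_nf
  have h_key : √(2 * π) * x ≤ 3 * exp (x ^ 2 / 6) := by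
    refine le_of_sq_le_sq ?_ (by positivity)
    rw [mul_pow, mul_pow, sq_sqrt (by positivity), ← h_sq]
    nlinarith [two_pi_mul_le_three_exp (by positivity : 0 ≤ x ^ 2 / 3)]
  rw [gaussianPDFReal]
  simp only [NNReal.coe_one, mul_one, sub_zero]
  rw [h_split, ← div_eq_inv_mul, le_div_iff₀ (by positivity)]
  nlinarith [exp_pos (-(2 / 3) * x ^ 2)]

lemma integral_Ioi_mul_exp_neg_mul_sq {b : ℝ} (hb : 0 < b) (a : ℝ) :
    ∫ x in Ioi a, x * exp (-b * x ^ 2) = exp (-b * a ^ 2) / (2 * b) := by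
  have h_deriv (x : ℝ) : HasDerivAt (fun x ↦ -exp (-b * x ^ 2) / (2 * b)) (x * exp (-b * x ^ 2)) x := by
    refine ((((hasDerivAt_pow 2 x).const_mul (-b)).exp.neg).div_const (2 * b)).congr_deriv ?_
    field_simp
    ring
  have h_lim : Tendsto (fun x ↦ -exp (-b * x ^ 2) / (2 * b)) atTop (𝓝 0) := by
    have : Tendsto (fun x : ℝ ↦ -b * x ^ 2) atTop atBot :=
      (tendsto_pow_atTop two_ne_zero).const_mul_atTop_of_neg (neg_neg_of_pos hb)
    simpa using ((tendsto_exp_atBot.comp this).neg).div_const (2 * b)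
  rw [integral_Ioi_of_hasDerivAt_of_tendsto' (fun x _ ↦ h_deriv x)
    (integrable_mul_exp_neg_mul_sq hb).integrableOn h_lim]
  ring

lemma gaussianReal_Iic_neg (v : NNReal) (z : ℝ) :
    gaussianReal 0 v (Iic (-z)) = gaussianReal 0 v (Ici z) := by
  have h_symm : (gaussianReal 0 v).map (fun x ↦ -x) = gaussianReal 0 v := by
    simpa using gaussianReal_map_neg (μ := 0) (v := v)
  rw [← h_symm, Measure.map_apply measurable_neg measurableSet_Iic, h_symm]
  congr 1
  ext x
  simp

theorem stmt_3_general (z : ℝ) :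
    exp (-(2 * z ^ 2) / 3) / 4 ≤
      ((gaussianReal 0 1) (Set.Iic (-z))).toReal := by
  have h_tail : ((gaussianReal 0 1) (Iic (-z))).toReal = ∫ x in Ioi z, gaussianPDFReal 0 1 x := by
    rw [gaussianReal_Iic_neg, gaussianReal_apply_eq_integral 0 one_ne_zero,
      integral_Ici_eq_integral_Ioi,
      ENNReal.toReal_ofReal (setIntegral_nonneg measurableSet_Ioi fun x _ ↦ gaussianPDFReal_nonneg 0 1 x)]
  have h_bound : exp (-(2 * z ^ 2) / 3) / 4 = ∫ x in Ioi z, x * exp (-(2 / 3) * x ^ 2) / 3 := by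
    rw [integral_div, integral_Ioi_mul_exp_neg_mul_sq (by norm_num)]
    ring_nf
  rw [h_tail, h_bound]
  exact setIntegral_mono ((integrable_mul_exp_neg_mul_sq (by norm_num)).div_const 3).integrableOn
    (integrable_gaussianPDFReal 0 1).integrableOn mul_exp_le_gaussianPDFReal

/-- Gaussian CDF lower bound: for a standard Gaussian `g` and all `z ≥ 0`,
`Φ(-z) ≥ e^{-2z²/3}/4`. -/
theorem stmt_3 (z : ℝ) (hz : 0 ≤ z) :
    exp (-(2 * z ^ 2) / 3) / 4 ≤
      ((gaussianReal 0 1) (Set.Iic (-z))).toReal :=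
  stmt_3_general z
end

section
/- Let μ ≪ μ_ref be probability measures on a space Z, α > 1, and f(x,·) : Z → ℝ measurable. Let F_μ(x) be a median of f(x,Z) under Z ~ μ. Then P_{Z~μ_ref}(f(x,Z) ≥ F_μ(x)) ≥ 2^{−α/(α−1)} · e^{−D_α(μ,μ_ref)}. -/
open MeasureTheory Real
open scoped ENNReal NNReal

/-- Median lower bound under change of measure: if `m` is a median of
`f(x,Z)` under `Z ~ μ` (so `P_{Z~μ}(f(x,Z) ≥ m) ≥ 1/2`) and `μ ≪ μ_ref`, then
`P_{Z~μ_ref}(f(x,Z) ≥ m) ≥ 2^{-α/(α-1)} e^{-D_α(μ,μ_ref)}` for `α > 1`. -/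
theorem stmt_13 {Z : Type*} [MeasurableSpace Z]
    (μ μref : Measure Z) [IsProbabilityMeasure μ] [IsProbabilityMeasure μref]
    (hac : μ ≪ μref)
    (α : ℝ) (hα : 1 < α)
    (hInt : Integrable (fun z => (μ.rnDeriv μref z).toReal ^ α) μref)
    (f : Z → ℝ) (hf : Measurable f)
    (m : ℝ) (hmed : (1 : ℝ) / 2 ≤ (μ {z | m ≤ f z}).toReal) :
    (2 : ℝ) ^ (-(α / (α - 1))) *
        exp (-((α - 1)⁻¹ * log (∫ z, (μ.rnDeriv μref z).toReal ^ α ∂μref))) ≤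
      (μref {z | m ≤ f z}).toReal := by
  have hα0 : (0 : ℝ) < α := lt_trans one_pos hα
  have hα1 : (0 : ℝ) < α - 1 := sub_pos.2 hα
  set q : ℝ := α / (α - 1) with hqdef
  have hq0 : 0 < q := div_pos hα0 hα1
  have hpq : α.HolderConjugate q := Real.HolderConjugate.conjExponent hα
  set E := {z | m ≤ f z} with hEdef
  have hE : MeasurableSet E := measurableSet_le measurable_const hf
  set ρ := μ.rnDeriv μref with hρdef
  have hρm : Measurable ρ := Measure.measurable_rnDeriv μ μref
  set I : ℝ := ∫ z, (ρ z).toReal ^ α ∂μref with hIdef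
  have hI0 : 0 ≤ I :=
    integral_nonneg fun z => rpow_nonneg ENNReal.toReal_nonneg α
  -- lintegral identity
  have h_ae : ∀ᵐ z ∂μref, ρ z ^ (α : ℝ) = ENNReal.ofReal ((ρ z).toReal ^ α) := by
    filter_upwards [Measure.rnDeriv_lt_top μ μref] with z hz
    rw [← ENNReal.ofReal_rpow_of_nonneg ENNReal.toReal_nonneg hα0.le,
      ENNReal.ofReal_toReal hz.ne]
  have h_lint : ∫⁻ z, ρ z ^ (α : ℝ) ∂μref = ENNReal.ofReal I := by
    rw [lintegral_congr_ae h_ae,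
      ← ofReal_integral_eq_lintegral_ofReal hInt
        (Filter.Eventually.of_forall fun z => rpow_nonneg ENNReal.toReal_nonneg α)]
  -- positivity of I
  have hρ_int : ∫⁻ z, ρ z ∂μref = 1 := by
    rw [Measure.lintegral_rnDeriv hac]; simp
  have hIpos : 0 < I := by
    rcases lt_or_eq_of_le hI0 with h | h
    · exact h
    · exfalso
      have h0 : ∫⁻ z, ρ z ^ (α : ℝ) ∂μref = 0 := by
        rw [h_lint, ← h]; simp
      rw [lintegral_eq_zero_iff (hρm.pow_const _)] at h0
      have : ρ =ᵐ[μref] 0 := by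
        filter_upwards [h0] with z hz
        have := (ENNReal.rpow_eq_zero_iff.1 hz)
        rcases this with ⟨h1, _⟩ | ⟨h1, h2⟩
        · exact h1
        · exact absurd h2 (not_lt.2 hα0.le)
      rw [lintegral_congr_ae this] at hρ_int
      simp at hρ_int
  -- Hölder
  have hg : Measurable (E.indicator (1 : Z → ℝ≥0∞)) := measurable_one.indicator hE
  have hHolder := ENNReal.lintegral_mul_le_Lp_mul_Lq μref hpq hρm.aemeasurable
    hg.aemeasurable
  have hL : ∫⁻ z, (ρ * E.indicator (1 : Z → ℝ≥0∞)) z ∂μref = μ E := by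
    have h1 : ∀ z, (ρ * E.indicator (1 : Z → ℝ≥0∞)) z = E.indicator ρ z := by
      intro z
      by_cases hz : z ∈ E <;> simp [hz]
    simp_rw [h1]
    rw [lintegral_indicator hE ρ, Measure.setLIntegral_rnDeriv hac]
  have hR : ∫⁻ z, E.indicator (1 : Z → ℝ≥0∞) z ^ q ∂μref = μref E := by
    have : ∀ z, E.indicator (1 : Z → ℝ≥0∞) z ^ q = E.indicator 1 z := by
      intro z
      by_cases hz : z ∈ E <;> simp [hz, ENNReal.zero_rpow_of_pos hq0]
    simp_rw [this]
    exact lintegral_indicator_one hE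
  rw [hL, h_lint, hR] at hHolder
  -- to real
  have hfin : ENNReal.ofReal I ^ (1 / α) * μref E ^ (1 / q) ≠ ⊤ := by
    apply ENNReal.mul_ne_top
    · exact ENNReal.rpow_ne_top_of_nonneg (by positivity) ENNReal.ofReal_ne_top
    · exact ENNReal.rpow_ne_top_of_nonneg (by positivity) (measure_ne_top _ _)
  have hHolderR : (μ E).toReal ≤ I ^ (1 / α) * (μref E).toReal ^ (1 / q) := by
    have := ENNReal.toReal_mono hfin hHolder
    rwa [ENNReal.toReal_mul, ← ENNReal.toReal_rpow, ← ENNReal.toReal_rpow,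
      ENNReal.toReal_ofReal hI0] at this
  set t : ℝ := (μref E).toReal with htdef
  have ht0 : 0 ≤ t := ENNReal.toReal_nonneg
  have hmain : (1 : ℝ) / 2 ≤ I ^ (1 / α) * t ^ (1 / q) := le_trans hmed hHolderR
  -- rewrite exp as rpow
  have hexp : exp (-((α - 1)⁻¹ * log I)) = I ^ (-(α - 1)⁻¹) := by
    rw [Real.rpow_def_of_pos hIpos]
    ring_nf
  rw [hexp]
  -- key: t^(1/q) ≥ (1/2) * I^(-(1/α))
  have hIα : (0 : ℝ) < I ^ (1 / α) := rpow_pos_of_pos hIpos _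
  have hstep : (1 / 2 : ℝ) * I ^ (-(1 / α)) ≤ t ^ (1 / q) := by
    rw [Real.rpow_neg hI0, ← div_eq_mul_inv, div_le_iff₀ hIα,
      mul_comm (t ^ (1 / q)) (I ^ (1 / α))]
    exact hmain
  -- raise to power q
  have hq' : (0 : ℝ) ≤ q := hq0.le
  have := Real.rpow_le_rpow (by positivity) hstep hq'
  rw [Real.mul_rpow (by norm_num) (rpow_nonneg hI0 _),
    ← Real.rpow_mul hI0, ← Real.rpow_mul ht0] at this
  have e1 : (1 / q) * q = 1 := by field_simp
  have e2 : -(1 / α) * q = -(α - 1)⁻¹ := by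
    rw [hqdef]
    field_simp
  have e3 : ((1 : ℝ) / 2) ^ q = 2 ^ (-q) := by
    rw [Real.div_rpow zero_le_one (by norm_num), Real.one_rpow,
      Real.rpow_neg (by norm_num), one_div]
  rw [e1, e2, e3, Real.rpow_one] at this
  exact this
end

section
/- Let σ₁ ≥ ⋯ ≥ σ_d > 0, X_i ~ Normal(0, σ_i²) independent, and define σ_* = max_{i ≤ d} σ_i √(log(i+1)). Then E[max_{i ≤ d} |X_i|] ≤ 2σ_* + √2 σ₁. -/
open MeasureTheory ProbabilityTheory Real
open scoped NNReal ENNReal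

lemma my_integral_gaussian (v : ℝ≥0) (hv : v ≠ 0) (g : ℝ → ℝ) :
    ∫ y, g y ∂(gaussianReal 0 v) = ∫ y, gaussianPDFReal 0 v y * g y := by
  rw [gaussianReal_of_var_ne_zero _ hv]
  have h : gaussianPDF 0 v = fun x => ((gaussianPDFReal 0 v x).toNNReal : ℝ≥0∞) := rfl
  rw [h, integral_withDensity_eq_integral_smul (measurable_gaussianPDFReal 0 v).real_toNNReal]
  congr 1; ext y
  simp [NNReal.smul_def, Real.coe_toNNReal _ (gaussianPDFReal_nonneg 0 v y)]

lemma my_vne {s : ℝ} (hs : 0 < s) : (s^2).toNNReal ≠ 0 := by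
  simp [Real.toNNReal_eq_zero, not_le, pow_pos hs, hs.ne']

lemma my_key {s : ℝ} (hs : 0 < s) (t y : ℝ) :
    gaussianPDFReal 0 (s^2).toNNReal y * rexp (t * y)
      = rexp (t^2*s^2/2) * ((√(2 * π * s^2))⁻¹ * rexp (-(1/(2*s^2)) * (y - t*s^2)^2)) := by
  have hv : (((s^2).toNNReal : ℝ≥0) : ℝ) = s^2 := Real.coe_toNNReal _ (sq_nonneg s)
  have hs2 : (0:ℝ) < s^2 := by positivity
  rw [gaussianPDFReal, hv, mul_assoc, ← Real.exp_add]
  conv_rhs => rw [mul_left_comm, ← Real.exp_add]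
  congr 1
  field_simp
  ring

lemma my_mgf {s : ℝ} (hs : 0 < s) (t : ℝ) :
    ∫ y, rexp (t * y) ∂(gaussianReal 0 (s^2).toNNReal) = rexp (t^2 * s^2 / 2) := by
  rw [my_integral_gaussian _ (my_vne hs)]
  simp_rw [my_key hs t]
  rw [integral_const_mul, integral_const_mul]
  have h1 : ∫ y, rexp (-(1/(2*s^2)) * (y - t*s^2)^2) = ∫ y, rexp (-(1/(2*s^2)) * y^2) :=
    integral_sub_right_eq_self (fun y => rexp (-(1/(2*s^2)) * y^2)) (t*s^2)
  rw [h1, integral_gaussian]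
  rw [show π / (1/(2*s^2)) = 2 * π * s^2 by field_simp]
  rw [inv_mul_cancel₀ (by positivity : √(2*π*s^2) ≠ 0), mul_one]

lemma my_integrable_exp {s : ℝ} (hs : 0 < s) (t : ℝ) :
    Integrable (fun y => rexp (t * y)) (gaussianReal 0 (s^2).toNNReal) := by
  rw [gaussianReal_of_var_ne_zero _ (my_vne hs),
    integrable_withDensity_iff (measurable_gaussianPDF 0 _)
      (ae_of_all _ fun x => ENNReal.ofReal_lt_top)]
  have h : ∀ y, rexp (t*y) * (gaussianPDF 0 (s^2).toNNReal y).toReal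
      = rexp (t^2*s^2/2) * ((√(2 * π * s^2))⁻¹ * rexp (-(1/(2*s^2)) * (y - t*s^2)^2)) := by
    intro y
    rw [gaussianPDF, ENNReal.toReal_ofReal (gaussianPDFReal_nonneg _ _ _), mul_comm, my_key hs t]
  simp_rw [h]
  exact ((((integrable_exp_neg_mul_sq (by positivity : (0:ℝ) < 1/(2*s^2))).comp_sub_right
    (t*s^2)).const_mul _).const_mul _)

lemma my_map_eval {d : ℕ} (μ : Fin d → Measure ℝ) [∀ i, IsProbabilityMeasure (μ i)] (i : Fin d) :
    (Measure.pi μ).map (Function.eval i) = μ i := by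
  ext s hs
  rw [Measure.map_apply (measurable_pi_apply i) hs, ← Set.univ_pi_update_univ, Measure.pi_pi]
  rw [Finset.prod_eq_single i (fun j _ hj => by rw [Function.update_of_ne hj]; exact measure_univ)
    (by simp)]
  rw [Function.update_self]


lemma my_integral_eval {d : ℕ} (μs : Fin d → Measure ℝ) [∀ i, IsProbabilityMeasure (μs i)]
    (i : Fin d) (f : ℝ → ℝ) (hf : AEStronglyMeasurable f (μs i)) :
    ∫ x, f (x i) ∂(Measure.pi μs) = ∫ y, f y ∂(μs i) := by
  conv_rhs => rw [← my_map_eval μs i]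
  rw [← my_map_eval μs i] at hf
  rw [integral_map (measurable_pi_apply i).aemeasurable hf]

lemma my_integrable_eval {d : ℕ} (μs : Fin d → Measure ℝ) [∀ i, IsProbabilityMeasure (μs i)]
    (i : Fin d) (f : ℝ → ℝ) (hf : Integrable f (μs i)) :
    Integrable (fun x => f (x i)) (Measure.pi μs) := by
  rw [← my_map_eval μs i] at hf
  exact (integrable_map_measure hf.aestronglyMeasurable
    (measurable_pi_apply i).aemeasurable).mp hf

lemma my_sum (n : ℕ) : ∑ k ∈ Finset.range n, (1:ℝ)/((k:ℝ)+2)^2 ≤ 1 - 1/((n:ℝ)+1) := by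
  induction n with
  | zero => simp
  | succ n ih =>
    rw [Finset.sum_range_succ]
    have hn1 : (0:ℝ) < (n:ℝ)+1 := by positivity
    have hn2 : (0:ℝ) < (n:ℝ)+2 := by positivity
    have h : (1:ℝ)/((n:ℝ)+2)^2 ≤ 1/(((n:ℝ)+1)*((n:ℝ)+2)) := by
      apply one_div_le_one_div_of_le (by positivity)
      nlinarith
    have h2 : 1/(((n:ℝ)+1)*((n:ℝ)+2)) = 1/((n:ℝ)+1) - 1/((n:ℝ)+2) := by
      field_simp
      norm_num
    push_cast
    rw [show (n:ℝ)+1+1 = (n:ℝ)+2 by ring]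
    linarith [h.trans_eq h2]

lemma my_pointwise {l b : ℝ} (hl : 0 < l) (y : ℝ) :
    |y| ≤ b + 1/l * rexp (-(l*b)) * (rexp (l*y) + rexp (-(l*y))) := by
  have h0 : rexp (l*|y|) ≤ rexp (l*y) + rexp (-(l*y)) := by
    rcases abs_cases y with ⟨h, _⟩ | ⟨h, _⟩
    · rw [h]; exact le_add_of_nonneg_right (Real.exp_nonneg _)
    · rw [h, show l * -y = -(l*y) by ring]
      exact le_add_of_nonneg_left (Real.exp_nonneg _)
  have h4 : l * (|y| - b) ≤ rexp (-(l*b)) * (rexp (l*y) + rexp (-(l*y))) := by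
    calc l * (|y| - b) ≤ rexp (l * (|y| - b)) := by
          linarith [Real.add_one_le_exp (l * (|y| - b))]
    _ = rexp (-(l*b)) * rexp (l * |y|) := by rw [← Real.exp_add]; congr 1; ring
    _ ≤ rexp (-(l*b)) * (rexp (l*y) + rexp (-(l*y))) :=
        mul_le_mul_of_nonneg_left h0 (Real.exp_nonneg _)
  have h5 := mul_le_mul_of_nonneg_left h4 (le_of_lt (one_div_pos.mpr hl))
  have h6 : 1/l * (l * (|y| - b)) = |y| - b := by field_simp
  rw [h6, ← mul_assoc] at h5
  linarith

lemma my_arith {s bb : ℝ} (hs : 0 < s) (_hb : 0 < bb) :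
    1/(bb/s^2) * rexp (-(bb/s^2 * bb)) *
      (rexp ((bb/s^2)^2 * s^2 / 2) + rexp ((-(bb/s^2))^2 * s^2 / 2))
      = 2 * s^2 / bb * rexp (-(bb^2/(2*s^2))) := by
  have h1 : ((-(bb/s^2))^2 : ℝ) = (bb/s^2)^2 := by ring
  rw [h1]
  have h2 : rexp ((bb/s^2)^2 * s^2 / 2) + rexp ((bb/s^2)^2 * s^2 / 2)
      = 2 * rexp ((bb/s^2)^2 * s^2 / 2) := by ring
  rw [h2, one_div_div]
  calc s^2/bb * rexp (-(bb/s^2 * bb)) * (2 * rexp ((bb/s^2)^2 * s^2/2))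
      = 2 * s^2 / bb * (rexp (-(bb/s^2*bb)) * rexp ((bb/s^2)^2*s^2/2)) := by ring
    _ = 2 * s^2 / bb * rexp (-(bb/s^2*bb) + (bb/s^2)^2*s^2/2) := by rw [Real.exp_add]
    _ = 2 * s^2 / bb * rexp (-(bb^2/(2*s^2))) := by
        congr 1
        field_simp
        ring

/-- Max of independent centered Gaussians, explicit form: with
`σ_* = max_i σ_i √(log(i+1))` (indices `i = 1, …, d`),
`E[max_i |X_i|] ≤ 2σ_* + √2 σ₁`. -/
theorem stmt_15 (d : ℕ) (hd : 0 < d) (σ : Fin d → ℝ)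
    (hσpos : ∀ i, 0 < σ i)
    (hσmono : ∀ i j : Fin d, i ≤ j → σ j ≤ σ i) :
    ∫ x, (⨆ i, |x i|)
        ∂(Measure.pi fun i : Fin d => gaussianReal 0 ((σ i ^ 2).toNNReal)) ≤
      2 * (⨆ i : Fin d, σ i * Real.sqrt (Real.log ((i : ℕ) + 2))) +
        Real.sqrt 2 * σ ⟨0, hd⟩ := by
  classical
  haveI : Nonempty (Fin d) := ⟨⟨0, hd⟩⟩
  set i1 : Fin d := ⟨0, hd⟩ with hi1
  set μ := Measure.pi fun i : Fin d => gaussianReal 0 ((σ i ^ 2).toNNReal) with hμ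
  set σs : ℝ := ⨆ i : Fin d, σ i * Real.sqrt (Real.log ((i : ℕ) + 2)) with hσs
  set b : ℝ := 2 * σs with hbdef
  have hlog2 : (0:ℝ) < Real.log 2 := Real.log_pos one_lt_two
  have hσsge : ∀ i : Fin d, σ i * √(Real.log (((i:ℕ):ℝ)+2)) ≤ σs := by
    intro i
    rw [hσs]
    exact le_ciSup (f := fun j : Fin d => σ j * √(Real.log (((j:ℕ):ℝ)+2)))
      (Set.Finite.bddAbove (Set.finite_range _)) i
  have hσspos : 0 < σs := by
    have h := hσsge i1
    have h2 : (0:ℝ) < σ i1 * √(Real.log ((((i1 : Fin d) : ℕ) : ℝ) + 2)) := by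
      apply mul_pos (hσpos _)
      apply Real.sqrt_pos.mpr
      apply Real.log_pos
      have : ((i1 : Fin d) : ℕ) = 0 := rfl
      rw [this]
      norm_num
    linarith
  have hbpos : 0 < b := by rw [hbdef]; linarith
  set l : Fin d → ℝ := fun i => b / σ i ^ 2 with hldef
  have hl : ∀ i, 0 < l i := fun i => by
    simp only [hldef]; exact div_pos hbpos (pow_pos (hσpos i) 2)
  set g : Fin d → ℝ → ℝ := fun i y =>
    1/(l i) * rexp (-(l i * b)) * (rexp (l i * y) + rexp (-(l i) * y)) with hg
  have hgnn : ∀ i y, 0 ≤ g i y := fun i y => by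
    simp only [hg]; positivity
  have hpt : ∀ x : Fin d → ℝ, (⨆ i, |x i|) ≤ b + ∑ i, g i (x i) := by
    intro x
    apply ciSup_le
    intro i
    have h1 := my_pointwise (b := b) (hl i) (x i)
    rw [show -(l i * x i) = -(l i) * x i from (neg_mul _ _).symm] at h1
    have h2 : g i (x i) ≤ ∑ j, g j (x j) :=
      Finset.single_le_sum (fun j _ => hgnn j (x j)) (Finset.mem_univ i)
    have h3 : |x i| ≤ b + g i (x i) := by simp only [hg]; exact h1
    linarith
  have hgint : ∀ i, Integrable (fun x : Fin d → ℝ => g i (x i)) μ := by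
    intro i
    rw [hμ]
    apply my_integrable_eval
    simp only [hg]
    exact (((my_integrable_exp (hσpos i) (l i)).add
      (my_integrable_exp (hσpos i) (-(l i)))).const_mul _)
  have hgval : ∀ i, ∫ x, g i (x i) ∂μ = 2 * σ i^2 / b * rexp (-(b^2/(2*σ i^2))) := by
    intro i
    rw [hμ, my_integral_eval _ i (g i) ?_]
    · simp only [hg]
      rw [integral_const_mul,
        integral_add (my_integrable_exp (hσpos i) (l i)) (my_integrable_exp (hσpos i) (-(l i))),
        my_mgf (hσpos i) (l i), my_mgf (hσpos i) (-(l i))]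
      simp only [hldef]
      exact my_arith (hσpos i) hbpos
    · simp only [hg]
      exact Continuous.aestronglyMeasurable (by fun_prop)
  have step1 : ∫ x, (⨆ i, |x i|) ∂μ ≤ ∫ x, (b + ∑ i, g i (x i)) ∂μ := by
    apply integral_mono_of_nonneg
    · refine ae_of_all _ fun x => ?_
      exact (abs_nonneg (x i1)).trans
        (le_ciSup (f := fun i => |x i|) (Set.Finite.bddAbove (Set.finite_range _)) i1)
    · exact (integrable_const b).add (integrable_finset_sum _ fun i _ => hgint i)
    · exact ae_of_all _ hpt
  have hbound : ∀ i : Fin d, 2 * σ i^2 / b * rexp (-(b^2/(2*σ i^2)))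
      ≤ σ i1 / √(Real.log 2) * (1/(((i:ℕ):ℝ)+2)^2) := by
    intro i
    have hin : (0:ℝ) ≤ ((i:ℕ):ℝ) := Nat.cast_nonneg _
    have hlogi : (0:ℝ) < Real.log (((i:ℕ):ℝ)+2) := Real.log_pos (by linarith)
    have hble : 2 * (σ i * √(Real.log (((i:ℕ):ℝ)+2))) ≤ b := by
      rw [hbdef]
      exact mul_le_mul_of_nonneg_left (hσsge i) (by norm_num)
    have he : rexp (-(b^2/(2*σ i^2))) ≤ 1/((((i:ℕ):ℝ)+2)^2) := by
      have hb2 : 4 * σ i^2 * Real.log (((i:ℕ):ℝ)+2) ≤ b^2 := by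
        have ha : (0:ℝ) ≤ 2 * (σ i * √(Real.log (((i:ℕ):ℝ)+2))) :=
          mul_nonneg (by norm_num) (mul_nonneg (hσpos i).le (Real.sqrt_nonneg _))
        have hmul := mul_le_mul hble hble ha hbpos.le
        have hss := Real.sq_sqrt hlogi.le
        nlinarith [hmul, hss]
      have hexp : 2 * Real.log (((i:ℕ):ℝ)+2) ≤ b^2/(2*σ i^2) := by
        rw [le_div_iff₀ (mul_pos two_pos (pow_pos (hσpos i) 2))]
        nlinarith
      calc rexp (-(b^2/(2*σ i^2))) ≤ rexp (-(2*Real.log (((i:ℕ):ℝ)+2))) :=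
            Real.exp_le_exp.mpr (by linarith)
        _ = 1/((((i:ℕ):ℝ)+2)^2) := by
            rw [Real.exp_neg, show (2:ℝ)*Real.log (((i:ℕ):ℝ)+2)
                  = Real.log ((((i:ℕ):ℝ)+2)^2) by rw [Real.log_pow]; push_cast; ring,
              Real.exp_log (by positivity), one_div]
    have hσ1 : σ i ≤ σ i1 := hσmono i1 i (by simp [hi1, Fin.le_def])
    have hsq2 : √(Real.log 2) ≤ √(Real.log (((i:ℕ):ℝ)+2)) :=
      Real.sqrt_le_sqrt (Real.log_le_log (by norm_num) (by linarith))
    have hc : 2 * σ i^2 / b ≤ σ i1 / √(Real.log 2) := by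
      rw [div_le_div_iff₀ hbpos (Real.sqrt_pos.mpr hlog2)]
      have h1 : 2 * σ i * √(Real.log 2) ≤ b := by
        calc 2 * σ i * √(Real.log 2) ≤ 2 * (σ i * √(Real.log (((i:ℕ):ℝ)+2))) := by
              nlinarith [hσpos i]
          _ ≤ b := hble
      nlinarith [Real.sqrt_nonneg (Real.log 2), hσpos i, hσpos i1, hbpos]
    exact mul_le_mul hc he (Real.exp_nonneg _)
      (div_nonneg (hσpos i1).le (Real.sqrt_nonneg _))
  have hsum : ∑ i : Fin d, (1:ℝ)/(((i:ℕ):ℝ)+2)^2 ≤ 1 := by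
    rw [Fin.sum_univ_eq_sum_range (fun k => (1:ℝ)/((k:ℝ)+2)^2)]
    calc ∑ k ∈ Finset.range d, (1:ℝ)/((k:ℝ)+2)^2 ≤ 1 - 1/((d:ℝ)+1) := my_sum d
      _ ≤ 1 := sub_le_self _ (by positivity)
  calc ∫ x, (⨆ i, |x i|) ∂μ ≤ ∫ x, (b + ∑ i, g i (x i)) ∂μ := step1
    _ = b + ∑ i, ∫ x, g i (x i) ∂μ := by
        rw [integral_add (integrable_const b) (integrable_finset_sum _ fun i _ => hgint i),
          integral_const, integral_finset_sum _ (fun i _ => hgint i)]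
        simp
    _ = b + ∑ i, 2 * σ i^2 / b * rexp (-(b^2/(2*σ i^2))) := by
        congr 1
        exact Finset.sum_congr rfl fun i _ => hgval i
    _ ≤ b + ∑ i : Fin d, σ i1 / √(Real.log 2) * (1/(((i:ℕ):ℝ)+2)^2) := by
        apply add_le_add_right
        exact Finset.sum_le_sum fun i _ => hbound i
    _ = b + σ i1 / √(Real.log 2) * ∑ i : Fin d, (1:ℝ)/(((i:ℕ):ℝ)+2)^2 := by
        rw [Finset.mul_sum]
    _ ≤ b + σ i1 / √(Real.log 2) * 1 := by
        apply add_le_add_right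
        exact mul_le_mul_of_nonneg_left hsum
          (div_nonneg (hσpos i1).le (Real.sqrt_nonneg _))
    _ ≤ 2 * σs + √2 * σ i1 := by
        rw [hbdef, mul_one]
        have hkey : σ i1 / √(Real.log 2) ≤ √2 * σ i1 := by
          rw [div_le_iff₀ (Real.sqrt_pos.mpr hlog2)]
          have h2 : (1:ℝ) ≤ √2 * √(Real.log 2) := by
            rw [← Real.sqrt_mul (by norm_num : (0:ℝ) ≤ 2)]
            have h3 : (1:ℝ) ≤ 2 * Real.log 2 := by
              nlinarith [Real.log_two_gt_d9]
            calc (1:ℝ) = √1 := Real.sqrt_one.symm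
              _ ≤ √(2 * Real.log 2) := Real.sqrt_le_sqrt h3
          nlinarith [hσpos i1]
        linarith
end

section
/- With f₀ as above (f₀(x) = inf_y (κ₀/2)‖x−y‖²_{Σ^{−1/2}} + ρ₀‖y‖, Σ positive definite), for every x ∈ ℝ^d and τ ∈ (0,1] with τκ₀‖Σ^{−1/2}x‖_* < ρ₀: ‖∇f₀(x)‖_Σ ≤ ‖Σ‖_op^{1/4}(1−τ)κ₀‖Σ^{−1/2}x‖_{Σ^{1/2}} + τκ₀‖x‖₂. -/
open MeasureTheory Real Matrix
open scoped RealInnerProductSpace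

section
open Filter
open scoped Topology

namespace Stmt17Aux

variable {H : Type*} [NormedAddCommGroup H] [InnerProductSpace ℝ H]

lemma norm_combo_sq (a b : H) (t : ℝ) :
    ‖(1 - t) • a + t • b‖ ^ 2
      = (1 - t) * ‖a‖ ^ 2 + t * ‖b‖ ^ 2 - t * (1 - t) * ‖a - b‖ ^ 2 := by
  have h1 : ‖(1 - t) • a + t • b‖ ^ 2
      = ‖(1-t) • a‖^2 + 2 * ⟪(1-t) • a, t • b⟫ + ‖t • b‖^2 := norm_add_sq_real _ _
  have h2 : ‖a - b‖ ^ 2 = ‖a‖^2 - 2 * ⟪a, b⟫ + ‖b‖^2 := norm_sub_sq_real a b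
  rw [h1, h2, real_inner_smul_left, real_inner_smul_right, norm_smul, norm_smul]
  rw [mul_pow, mul_pow, Real.norm_eq_abs, Real.norm_eq_abs, sq_abs, sq_abs]
  ring

section Moreau

variable [FiniteDimensional ℝ H] {κ : ℝ} {g : H → ℝ}

/-- existence of a minimizer of the Moreau objective. -/
lemma exists_min (hκ : 0 < κ) (hgc : Continuous g) (hgnn : ∀ y, 0 ≤ g y) (z : H) :
    ∃ p : H, ∀ y, κ/2 * ‖z - p‖^2 + g p ≤ κ/2 * ‖z - y‖^2 + g y := by
  have hφc : Continuous (fun y : H => κ/2 * ‖z - y‖^2 + g y) := by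
    apply Continuous.add _ hgc
    exact (continuous_const.mul (((continuous_const.sub continuous_id).norm).pow 2))
  obtain ⟨R₀, h0, hR₀sq⟩ : ∃ R₀ : ℝ, 0 ≤ R₀ ∧ κ/2 * R₀^2 = g z + 1 := by
    refine ⟨Real.sqrt (2 * (g z + 1) / κ), Real.sqrt_nonneg _, ?_⟩
    have hgz := hgnn z
    rw [Real.sq_sqrt (by positivity)]
    field_simp
  obtain ⟨p, hpmem, hpmin⟩ :=
    (isCompact_closedBall z R₀).exists_isMinOn ⟨z, Metric.mem_closedBall_self h0⟩
      hφc.continuousOn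
  refine ⟨p, fun y => ?_⟩
  by_cases hy : y ∈ Metric.closedBall z R₀
  · exact hpmin hy
  · have h1 : R₀ < ‖z - y‖ := by
      rw [Metric.mem_closedBall, dist_comm] at hy
      simpa [dist_eq_norm] using not_le.mp hy
    have hR2 : R₀^2 ≤ ‖z - y‖^2 := by nlinarith [sq_nonneg (‖z - y‖ - R₀)]
    have h2 : κ/2 * R₀^2 ≤ κ/2 * ‖z - y‖^2 :=
      mul_le_mul_of_nonneg_left hR2 (by positivity)
    have h3 : κ/2 * ‖z - p‖^2 + g p ≤ κ/2 * ‖z - z‖^2 + g z :=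
      hpmin (Metric.mem_closedBall_self h0)
    simp only [sub_self, norm_zero] at h3
    have h5 := hgnn y
    nlinarith
/-- strong minimality inequality. -/
lemma strong_min (hκ : 0 < κ)
    (hgconv : ∀ a b : H, ∀ t : ℝ, 0 < t → t < 1 →
      g ((1-t) • a + t • b) ≤ (1-t) * g a + t * g b)
    {z p : H} (hp : ∀ y, κ/2 * ‖z - p‖^2 + g p ≤ κ/2 * ‖z - y‖^2 + g y) (y : H) :
    κ/2 * ‖z - p‖^2 + g p + κ/2 * ‖y - p‖^2 ≤ κ/2 * ‖z - y‖^2 + g y := by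
  have key : ∀ t : ℝ, 0 < t → t < 1 →
      κ/2 * ‖z - p‖^2 + g p + κ/2 * (1-t) * ‖y - p‖^2 ≤ κ/2 * ‖z - y‖^2 + g y := by
    intro t ht0 ht1
    have hz : z - ((1-t) • p + t • y) = (1-t) • (z - p) + t • (z - y) := by
      simp [smul_sub, sub_smul]; abel
    have hmin := hp ((1-t) • p + t • y)
    rw [hz, norm_combo_sq] at hmin
    have hgc := hgconv p y t ht0 ht1
    have hab : (z - p) - (z - y) = y - p := by abel
    rw [hab] at hmin
    have hmul : t * (κ/2 * ‖z - p‖^2 + g p + κ/2 * (1-t) * ‖y - p‖^2)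
        ≤ t * (κ/2 * ‖z - y‖^2 + g y) := by nlinarith
    exact le_of_mul_le_mul_left hmul ht0
  have hlim : Tendsto (fun t : ℝ => κ/2 * ‖z - p‖^2 + g p + κ/2 * (1-t) * ‖y - p‖^2)
      (𝓝[>] (0:ℝ)) (𝓝 (κ/2 * ‖z - p‖^2 + g p + κ/2 * (1-(0:ℝ)) * ‖y - p‖^2)) := by
    apply Tendsto.mono_left _ nhdsWithin_le_nhds
    exact (Continuous.tendsto (by continuity) 0)
  have hev : ∀ᶠ t in 𝓝[>] (0:ℝ),
      (fun t : ℝ => κ/2 * ‖z - p‖^2 + g p + κ/2 * (1-t) * ‖y - p‖^2) t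
        ≤ κ/2 * ‖z - y‖^2 + g y := by
    filter_upwards [Ioo_mem_nhdsGT_of_mem (Set.mem_Ico.mpr ⟨le_refl 0, one_pos⟩)] with t ht
    exact key t ht.1 ht.2
  have := le_of_tendsto hlim hev
  simpa using this

/-- firm nonexpansiveness consequences. -/
lemma firm (hκ : 0 < κ) {z z' p p' : H}
    (hp : ∀ y, κ/2 * ‖z - p‖^2 + g p + κ/2 * ‖y - p‖^2 ≤ κ/2 * ‖z - y‖^2 + g y)
    (hp' : ∀ y, κ/2 * ‖z' - p'‖^2 + g p' + κ/2 * ‖y - p'‖^2 ≤ κ/2 * ‖z' - y‖^2 + g y) :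
    ‖p - p'‖ ≤ ‖z - z'‖ ∧ ‖(z - p) - (z' - p')‖ ≤ ‖z - z'‖ := by
  have i1 := hp p'
  have i2 := hp' p
  have e1 : ‖z - p'‖^2 = ‖z - p‖^2 + 2 * ⟪z - p, p - p'⟫ + ‖p - p'‖^2 := by
    have : z - p' = (z - p) + (p - p') := by abel
    rw [this, norm_add_sq_real]
  have e2 : ‖z' - p‖^2 = ‖z' - p'‖^2 + 2 * ⟪z' - p', p' - p⟫ + ‖p - p'‖^2 := by
    have h : z' - p = (z' - p') + (p' - p) := by abel
    rw [h, norm_add_sq_real, norm_sub_rev p' p]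
  have e3 : ⟪z' - p', p' - p⟫ = -⟪z' - p', p - p'⟫ := by
    rw [← inner_neg_right]; congr 1; abel
  have e4 : ⟪z - p, p - p'⟫ - ⟪z' - p', p - p'⟫ = ⟪z - z', p - p'⟫ - ‖p - p'‖^2 := by
    rw [← inner_sub_left]
    have h : (z - p) - (z' - p') = (z - z') - (p - p') := by abel
    rw [h, inner_sub_left, real_inner_self_eq_norm_sq]
  have e5 : ‖p' - p‖ = ‖p - p'‖ := norm_sub_rev _ _
  rw [e5] at i1
  have key : ‖p - p'‖^2 ≤ ⟪z - z', p - p'⟫ := by nlinarith [i1, i2, e1, e2, e3, e4]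
  have hCS : ⟪z - z', p - p'⟫ ≤ ‖z - z'‖ * ‖p - p'‖ := real_inner_le_norm _ _
  constructor
  · by_cases h0 : ‖p - p'‖ = 0
    · rw [h0]; exact norm_nonneg _
    · have hpos : 0 < ‖p - p'‖ := lt_of_le_of_ne (norm_nonneg _) (Ne.symm h0)
      nlinarith
  · have e6 : ‖(z - p) - (z' - p')‖^2
        = ‖z - z'‖^2 - 2 * ⟪z - z', p - p'⟫ + ‖p - p'‖^2 := by
      have h : (z - p) - (z' - p') = (z - z') - (p - p') := by abel
      rw [h, norm_sub_sq_real]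
    have e7 : ‖(z - p) - (z' - p')‖^2 ≤ ‖z - z'‖^2 := by nlinarith
    calc ‖(z - p) - (z' - p')‖ = Real.sqrt (‖(z - p) - (z' - p')‖^2) := by
          rw [Real.sqrt_sq (norm_nonneg _)]
      _ ≤ Real.sqrt (‖z - z'‖^2) := Real.sqrt_le_sqrt e7
      _ = ‖z - z'‖ := Real.sqrt_sq (norm_nonneg _)

lemma envelope_eq (hκ : 0 < κ) (hgnn : ∀ y, 0 ≤ g y) {z p : H}
    (hp : ∀ y, κ/2 * ‖z - p‖^2 + g p ≤ κ/2 * ‖z - y‖^2 + g y) :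
    (⨅ y : H, κ/2 * ‖z - y‖^2 + g y) = κ/2 * ‖z - p‖^2 + g p := by
  apply le_antisymm
  · refine ciInf_le ⟨0, ?_⟩ p
    rintro v ⟨y, rfl⟩
    have := hgnn y
    positivity
  · exact le_ciInf hp

lemma envelope_hasGradient (hκ : 0 < κ) (hgnn : ∀ y, 0 ≤ g y) (P : H → H)
    (hP : ∀ z y, κ/2 * ‖z - P z‖^2 + g (P z) + κ/2 * ‖y - P z‖^2 ≤ κ/2 * ‖z - y‖^2 + g y)
    (z : H) :
    HasGradientAt (fun u : H => ⨅ y : H, κ/2 * ‖u - y‖^2 + g y) (κ • (z - P z)) z := by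
  have hmin : ∀ w y, κ/2 * ‖w - P w‖^2 + g (P w) ≤ κ/2 * ‖w - y‖^2 + g y := by
    intro w y
    have := hP w y
    nlinarith [sq_nonneg ‖y - P w‖]
  have hval : ∀ w : H, (⨅ y : H, κ/2 * ‖w - y‖^2 + g y) = κ/2 * ‖w - P w‖^2 + g (P w) :=
    fun w => envelope_eq hκ hgnn (hmin w)
  rw [hasGradientAt_iff_isLittleO, Asymptotics.isLittleO_iff]
  intro c hc
  have hck : 0 < c / κ := div_pos hc hκ
  filter_upwards [Metric.ball_mem_nhds z hck] with z' hz'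
  have hz'n : ‖z' - z‖ < c / κ := by
    rw [Metric.mem_ball, dist_eq_norm] at hz'; exact hz'
  have hfirm := firm hκ (hP z) (hP z')
  have hpp : ‖P z - P z'‖ ≤ ‖z' - z‖ := by
    rw [norm_sub_rev z']; exact hfirm.1
  -- upper bound
  have hub : (⨅ y : H, κ/2 * ‖z' - y‖^2 + g y) - (⨅ y : H, κ/2 * ‖z - y‖^2 + g y)
      - ⟪κ • (z - P z), z' - z⟫ ≤ κ/2 * ‖z' - z‖^2 := by
    have h1 : (⨅ y : H, κ/2 * ‖z' - y‖^2 + g y) ≤ κ/2 * ‖z' - P z‖^2 + g (P z) := by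
      rw [hval z']; exact hmin z' (P z)
    have h2 : ‖z' - P z‖^2 = ‖z - P z‖^2 + 2 * ⟪z - P z, z' - z⟫ + ‖z' - z‖^2 := by
      have h : z' - P z = (z - P z) + (z' - z) := by abel
      rw [h, norm_add_sq_real]
    have h2' : κ/2 * ‖z' - P z‖^2
        = κ/2 * ‖z - P z‖^2 + κ * ⟪z - P z, z' - z⟫ + κ/2 * ‖z' - z‖^2 := by
      rw [h2]; ring
    rw [hval z, real_inner_smul_left]
    linarith [h1, h2'.le]
  -- lower bound
  have hlb : -(κ * ‖z' - z‖^2) ≤ (⨅ y : H, κ/2 * ‖z' - y‖^2 + g y)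
      - (⨅ y : H, κ/2 * ‖z - y‖^2 + g y) - ⟪κ • (z - P z), z' - z⟫ := by
    have h1 : (⨅ y : H, κ/2 * ‖z - y‖^2 + g y) ≤ κ/2 * ‖z - P z'‖^2 + g (P z') := by
      rw [hval z]; exact hmin z (P z')
    have h2 : ‖z' - P z'‖^2 = ‖z - P z'‖^2 + 2 * ⟪z - P z', z' - z⟫ + ‖z' - z‖^2 := by
      have h : z' - P z' = (z - P z') + (z' - z) := by abel
      rw [h, norm_add_sq_real]
    have h3 : ⟪z - P z', z' - z⟫ = ⟪z - P z, z' - z⟫ + ⟪P z - P z', z' - z⟫ := by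
      rw [← inner_add_left]; congr 1; abel
    have h4 : |⟪P z - P z', z' - z⟫| ≤ ‖z' - z‖^2 := by
      calc |⟪P z - P z', z' - z⟫| ≤ ‖P z - P z'‖ * ‖z' - z‖ := abs_real_inner_le_norm _ _
        _ ≤ ‖z' - z‖ * ‖z' - z‖ := mul_le_mul_of_nonneg_right hpp (norm_nonneg _)
        _ = ‖z' - z‖^2 := (sq ‖z' - z‖).symm
    have h5 : (⨅ y : H, κ/2 * ‖z' - y‖^2 + g y) = κ/2 * ‖z' - P z'‖^2 + g (P z') := hval z'
    have h6 := abs_le.mp h4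
    have h2' : κ/2 * ‖z' - P z'‖^2
        = κ/2 * ‖z - P z'‖^2 + κ * ⟪z - P z', z' - z⟫ + κ/2 * ‖z' - z‖^2 := by
      rw [h2]; ring
    have h3' : κ * ⟪z - P z', z' - z⟫
        = κ * ⟪z - P z, z' - z⟫ + κ * ⟪P z - P z', z' - z⟫ := by
      rw [h3]; ring
    have h4' : -(κ * ‖z' - z‖^2) ≤ κ * ⟪P z - P z', z' - z⟫ := by
      have := mul_le_mul_of_nonneg_left h6.1 hκ.le
      linarith
    have hnn2 : 0 ≤ κ * ‖z' - z‖^2 := by positivity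
    rw [real_inner_smul_left]
    linarith [h1, h2'.le, h2'.ge, h5.le, h5.ge]
  have habs : |(⨅ y : H, κ/2 * ‖z' - y‖^2 + g y) - (⨅ y : H, κ/2 * ‖z - y‖^2 + g y)
      - ⟪κ • (z - P z), z' - z⟫| ≤ κ * ‖z' - z‖^2 := by
    have hnn : 0 ≤ κ * ‖z' - z‖^2 := by positivity
    rw [abs_le]
    exact ⟨by linarith, by linarith⟩
  rw [Real.norm_eq_abs]
  calc |(⨅ y : H, κ/2 * ‖z' - y‖^2 + g y) - (⨅ y : H, κ/2 * ‖z - y‖^2 + g y)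
      - ⟪κ • (z - P z), z' - z⟫| ≤ κ * ‖z' - z‖^2 := habs
    _ ≤ c * ‖z' - z‖ := by
      have hle : ‖z' - z‖ * κ ≤ c := (le_div_iff₀ hκ).mp hz'n.le
      nlinarith [norm_nonneg (z' - z)]

lemma min_unique (hκ : 0 < κ) {z p q : H}
    (hp : ∀ y, κ/2 * ‖z - p‖^2 + g p + κ/2 * ‖y - p‖^2 ≤ κ/2 * ‖z - y‖^2 + g y)
    (hq : ∀ y, κ/2 * ‖z - q‖^2 + g q ≤ κ/2 * ‖z - y‖^2 + g y) : p = q := by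
  have h1 := hp q
  have h2 := hq p
  have h3 : κ/2 * ‖q - p‖^2 ≤ 0 := by linarith
  have h4 : ‖q - p‖^2 ≤ 0 := by nlinarith
  have h5 : ‖q - p‖ = 0 := by nlinarith [norm_nonneg (q - p), sq_nonneg ‖q - p‖]
  have h6 : q - p = 0 := norm_eq_zero.mp h5
  have : q = p := by rwa [sub_eq_zero] at h6
  exact this.symm

end Moreau

section Concrete

variable {d : ℕ}

lemma inner_eq_dot (u v : EuclideanSpace ℝ (Fin d)) :
    (inner ℝ u v : ℝ) = (fun i => u i) ⬝ᵥ (fun i => v i) := by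
  simp [PiLp.inner_apply, dotProduct, RCLike.inner_apply, mul_comm]

lemma norm_sq_eq_dot (u : EuclideanSpace ℝ (Fin d)) :
    ‖u‖^2 = (fun i => u i) ⬝ᵥ (fun i => u i) := by
  rw [← real_inner_self_eq_norm_sq, inner_eq_dot]

lemma dot_shift (M : Matrix (Fin d) (Fin d) ℝ) (u v : Fin d → ℝ) :
    u ⬝ᵥ M *ᵥ v = (Mᵀ *ᵥ u) ⬝ᵥ v := by
  rw [Matrix.dotProduct_mulVec, Matrix.mulVec_transpose]

lemma dot_shift' (M : Matrix (Fin d) (Fin d) ℝ) (u v : Fin d → ℝ) :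
    (M *ᵥ u) ⬝ᵥ v = u ⬝ᵥ (Mᵀ *ᵥ v) := by
  rw [dotProduct_comm, dot_shift, dotProduct_comm]

lemma inner_toE (M M' : Matrix (Fin d) (Fin d) ℝ) (u v : EuclideanSpace ℝ (Fin d)) :
    (inner ℝ (Matrix.toEuclideanLin M u) (Matrix.toEuclideanLin M' v) : ℝ)
      = (fun i => u i) ⬝ᵥ ((Mᵀ * M') *ᵥ (fun i => v i)) := by
  rw [inner_eq_dot]
  show (M *ᵥ (fun i => u i)) ⬝ᵥ (M' *ᵥ (fun i => v i)) = _
  rw [dot_shift', Matrix.mulVec_mulVec]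

lemma seminorm_le (N : Seminorm ℝ (EuclideanSpace ℝ (Fin d))) :
    ∃ C : ℝ, ∀ w : EuclideanSpace ℝ (Fin d), N w ≤ C * ‖w‖ := by
  refine ⟨∑ i : Fin d, N (EuclideanSpace.single i 1), fun w => ?_⟩
  have hw : ∑ i : Fin d, w i • EuclideanSpace.single i (1:ℝ) = w := by
    have h := (EuclideanSpace.basisFun (Fin d) ℝ).sum_repr w
    simpa [EuclideanSpace.basisFun_apply, EuclideanSpace.basisFun_repr] using h
  calc N w = N (∑ i : Fin d, w i • EuclideanSpace.single i (1:ℝ)) := by rw [hw]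
    _ ≤ ∑ i : Fin d, N (w i • EuclideanSpace.single i (1:ℝ)) :=
        Finset.le_sum_of_subadditive N (map_zero N).le (map_add_le_add N) _ _
    _ ≤ ∑ i : Fin d, N (EuclideanSpace.single i (1:ℝ)) * ‖w‖ := by
        apply Finset.sum_le_sum
        intro i _
        rw [map_smul_eq_mul]
        have h2 : (inner ℝ (EuclideanSpace.single i (1:ℝ)) w : ℝ) = w i := by
          simp [EuclideanSpace.inner_single_left]
        have h1 : ‖w i‖ ≤ ‖w‖ := by
          rw [← h2]
          calc ‖(inner ℝ (EuclideanSpace.single i (1:ℝ)) w : ℝ)‖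
              ≤ ‖(EuclideanSpace.single i (1:ℝ) : EuclideanSpace ℝ (Fin d))‖ * ‖w‖ :=
                norm_inner_le_norm _ _
            _ = ‖w‖ := by rw [EuclideanSpace.norm_single]; simp
        calc ‖w i‖ * N (EuclideanSpace.single i (1:ℝ))
            ≤ ‖w‖ * N (EuclideanSpace.single i (1:ℝ)) :=
              mul_le_mul_of_nonneg_right h1 (apply_nonneg N _)
          _ = N (EuclideanSpace.single i (1:ℝ)) * ‖w‖ := mul_comm _ _
    _ = (∑ i : Fin d, N (EuclideanSpace.single i (1:ℝ))) * ‖w‖ := (Finset.sum_mul _ _ _).symm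

lemma seminorm_continuous (N : Seminorm ℝ (EuclideanSpace ℝ (Fin d))) :
    Continuous fun w : EuclideanSpace ℝ (Fin d) => (N w : ℝ) := by
  obtain ⟨C, hC⟩ := seminorm_le N
  have habs : ∀ a b : EuclideanSpace ℝ (Fin d), |(N a : ℝ) - N b| ≤ C * ‖a - b‖ := by
    intro a b
    rw [abs_le]
    constructor
    · have := (map_add_le_add N (a - b) a)
      have h0 : b - a = -(a-b) := by abel
      have h1 : N b ≤ N (b - a) + N a := by
        have := map_add_le_add N (b - a) a
        simpa using this
      have h2 : N (b - a) = N (a - b) := by rw [h0, map_neg_eq_map]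
      have h3 := hC (a - b)
      linarith
    · have h1 : N a ≤ N (a - b) + N b := by
        have := map_add_le_add N (a - b) b
        simpa using this
      have h3 := hC (a - b)
      linarith
  apply LipschitzWith.continuous (K := Real.toNNReal C)
  apply LipschitzWith.of_dist_le_mul
  intro a b
  rw [Real.dist_eq, dist_eq_norm]
  calc |(N a : ℝ) - N b| ≤ C * ‖a - b‖ := habs a b
    _ ≤ (Real.toNNReal C : ℝ) * ‖a - b‖ :=
        mul_le_mul_of_nonneg_right (Real.le_coe_toNNReal C) (norm_nonneg _)

lemma seminorm_ge (N : Seminorm ℝ (EuclideanSpace ℝ (Fin d)))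
    (hNdef : ∀ y : EuclideanSpace ℝ (Fin d), N y = 0 → y = 0) :
    ∃ c : ℝ, 0 < c ∧ ∀ w : EuclideanSpace ℝ (Fin d), c * ‖w‖ ≤ N w := by
  by_cases hd : ∀ w : EuclideanSpace ℝ (Fin d), w = 0
  · refine ⟨1, one_pos, fun w => ?_⟩
    rw [hd w]
    simp
  · push_neg at hd
    obtain ⟨w₀, hw₀⟩ := hd
    have : Nontrivial (EuclideanSpace ℝ (Fin d)) := ⟨⟨w₀, 0, hw₀⟩⟩
    have hsph : (Metric.sphere (0 : EuclideanSpace ℝ (Fin d)) 1).Nonempty :=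
      NormedSpace.sphere_nonempty.mpr zero_le_one
    obtain ⟨s₀, hs₀mem, hs₀min⟩ :=
      (isCompact_sphere (0 : EuclideanSpace ℝ (Fin d)) 1).exists_isMinOn hsph
        (seminorm_continuous N).continuousOn
    have hs₀ : ‖s₀‖ = 1 := by simpa using mem_sphere_zero_iff_norm.mp hs₀mem
    have hc : 0 < N s₀ := by
      rcases (apply_nonneg N s₀).eq_or_lt with h | h
      · exfalso
        have := hNdef s₀ h.symm
        rw [this] at hs₀
        simp at hs₀
      · exact h
    refine ⟨N s₀, hc, fun w => ?_⟩
    by_cases hw : w = 0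
    · simp [hw]
    · have hnw : 0 < ‖w‖ := norm_pos_iff.mpr hw
      have hmem : (‖w‖⁻¹ • w) ∈ Metric.sphere (0 : EuclideanSpace ℝ (Fin d)) 1 := by
        rw [mem_sphere_zero_iff_norm, norm_smul, norm_inv, norm_norm]
        field_simp
      have h1 : N s₀ ≤ N (‖w‖⁻¹ • w) := hs₀min hmem
      have h2 : N (‖w‖⁻¹ • w) = ‖w‖⁻¹ * N w := by
        rw [map_smul_eq_mul, norm_inv, norm_norm]
      rw [h2] at h1
      have := mul_le_mul_of_nonneg_right h1 hnw.le
      calc N s₀ * ‖w‖ ≤ ‖w‖⁻¹ * N w * ‖w‖ := this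
        _ = N w := by field_simp

lemma rayleigh {M : Matrix (Fin d) (Fin d) ℝ} (hM : M.IsHermitian)
    (v : EuclideanSpace ℝ (Fin d)) :
    (fun i => v i) ⬝ᵥ M *ᵥ (fun i => v i) ≤ (⨆ i, hM.eigenvalues i) * ‖v‖^2 := by
  have hdot : (fun i => v i) ⬝ᵥ M *ᵥ (fun i => v i)
      = (inner ℝ v (Matrix.toEuclideanLin M v) : ℝ) := by
    rw [inner_eq_dot]
    rfl
  rcases isEmpty_or_nonempty (Fin d) with hempty | hnon
  · have h0 : (fun i => v i) ⬝ᵥ M *ᵥ (fun i => v i) = 0 := by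
      simp [dotProduct]
    have h1 : ‖v‖^2 = 0 := by
      rw [norm_sq_eq_dot]
      simp [dotProduct]
    rw [h0, h1, mul_zero]
  · set B := hM.eigenvectorBasis with hB
    set lam := hM.eigenvalues with hlam
    set c : Fin d → ℝ := fun i => B.repr v i with hc
    have hsum : ∑ i : Fin d, c i • B i = v := B.sum_repr v
    have hbdd : BddAbove (Set.range lam) := (Set.finite_range lam).bddAbove
    have hle : ∀ i, lam i ≤ ⨆ j, lam j := fun i => le_ciSup hbdd i
    have hMB : ∀ i, Matrix.toEuclideanLin M (B i) = lam i • B i := by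
      intro i
      apply PiLp.ext
      intro j
      have := congrFun (hM.mulVec_eigenvectorBasis i) j
      exact this
    have hMv : Matrix.toEuclideanLin M v = ∑ i : Fin d, (c i * lam i) • B i := by
      conv_lhs => rw [← hsum]
      rw [map_sum]
      apply Finset.sum_congr rfl
      intro i _
      rw [_root_.map_smul, hMB i, smul_smul, mul_comm]
    have hrepr : ∀ i, (inner ℝ v (B i) : ℝ) = c i := by
      intro i
      rw [real_inner_comm]
      exact (B.repr_apply_apply v i).symm
    have hinner : (inner ℝ v (Matrix.toEuclideanLin M v) : ℝ) = ∑ i : Fin d, lam i * (c i)^2 := by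
      rw [hMv, inner_sum]
      apply Finset.sum_congr rfl
      intro i _
      rw [real_inner_smul_right, hrepr i]
      ring
    have hnorm : ‖v‖^2 = ∑ i : Fin d, (c i)^2 := by
      rw [← real_inner_self_eq_norm_sq]
      conv_lhs => rw [← hsum]
      rw [inner_sum]
      apply Finset.sum_congr rfl
      intro i _
      rw [real_inner_smul_right, hsum, hrepr i]
      ring
    rw [hdot, hinner, hnorm, Finset.mul_sum]
    apply Finset.sum_le_sum
    intro i _
    exact mul_le_mul_of_nonneg_right (hle i) (sq_nonneg _)

lemma toE_mul (M M' : Matrix (Fin d) (Fin d) ℝ) (u : EuclideanSpace ℝ (Fin d)) :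
    Matrix.toEuclideanLin (M * M') u = Matrix.toEuclideanLin M (Matrix.toEuclideanLin M' u) := by
  apply PiLp.ext
  intro j
  show ((M * M') *ᵥ (fun i => u i)) j = (M *ᵥ (fun i => (Matrix.toEuclideanLin M' u) i)) j
  rw [← Matrix.mulVec_mulVec]
  rfl

lemma toE_one (u : EuclideanSpace ℝ (Fin d)) :
    Matrix.toEuclideanLin (1 : Matrix (Fin d) (Fin d) ℝ) u = u := by
  apply PiLp.ext
  intro j
  show ((1 : Matrix (Fin d) (Fin d) ℝ) *ᵥ (fun i => u i)) j = u j
  rw [Matrix.one_mulVec]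

end Concrete

end Stmt17Aux

end

open Stmt17Aux

set_option maxHeartbeats 4000000

/-- Gradient split bound for the infimal convolution
`f₀(x) = inf_y (κ₀/2)‖x-y‖²_{Σ^{-1/2}} + ρ₀‖y‖` (with `S = Σ^{1/2}`):
if `τκ₀‖Σ^{-1/2}x‖_* < ρ₀` for `τ ∈ (0,1]`, then
`‖∇f₀(x)‖_Σ ≤ ‖Σ‖_op^{1/4}(1-τ)κ₀‖Σ^{-1/2}x‖_{Σ^{1/2}} + τκ₀‖x‖₂`. -/
theorem stmt_17 {d : ℕ} (Sig S : Matrix (Fin d) (Fin d) ℝ)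
    (hSig : Sig.PosDef) (hS : S.PosDef) (hSS : S * S = Sig)
    (N : Seminorm ℝ (EuclideanSpace ℝ (Fin d)))
    (hNdef : ∀ y, N y = 0 → y = 0)
    (κ₀ ρ₀ : ℝ) (hκ : 0 < κ₀) (hρ : 0 ≤ ρ₀)
    (f₀ : EuclideanSpace ℝ (Fin d) → ℝ)
    (hf₀ : ∀ x, f₀ x = ⨅ y : EuclideanSpace ℝ (Fin d),
      (κ₀ / 2) * ((fun i => (x - y) i) ⬝ᵥ S⁻¹.mulVec (fun i => (x - y) i)) +
        ρ₀ * N y)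
    (x : EuclideanSpace ℝ (Fin d)) (τ : ℝ) (hτ : τ ∈ Set.Ioc (0 : ℝ) 1)
    (hsmall : τ * κ₀ *
        (⨆ y : {y : EuclideanSpace ℝ (Fin d) // N y ≤ 1},
          (S⁻¹.mulVec (fun i => x i)) ⬝ᵥ (fun i => (y : EuclideanSpace ℝ (Fin d)) i))
      < ρ₀) :
    Real.sqrt ((fun i => gradient f₀ x i) ⬝ᵥ Sig.mulVec (fun i => gradient f₀ x i)) ≤
      (⨆ i, hSig.1.eigenvalues i) ^ ((1 : ℝ) / 4) * (1 - τ) * κ₀ *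
          Real.sqrt ((S⁻¹.mulVec fun i => x i) ⬝ᵥ S.mulVec (S⁻¹.mulVec fun i => x i)) +
        τ * κ₀ * ‖x‖ := by

  classical
  obtain ⟨hτ0, hτ1⟩ := hτ
  -- matrix algebra facts
  have hdS : IsUnit S.det := hS.det_pos.ne'.isUnit
  have hSiS : S⁻¹ * S = 1 := Matrix.nonsing_inv_mul S hdS
  have hSSi : S * S⁻¹ = 1 := Matrix.mul_nonsing_inv S hdS
  have hA : (S⁻¹).PosDef := hS.inv
  have hAsymm : (S⁻¹)ᵀ = S⁻¹ := by
    rw [← Matrix.conjTranspose_eq_transpose_of_trivial]; exact hA.1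
  have hSsymm : Sᵀ = S := by
    rw [← Matrix.conjTranspose_eq_transpose_of_trivial]; exact hS.1
  set R : Matrix (Fin d) (Fin d) ℝ := (open scoped MatrixOrder in CFC.sqrt S⁻¹) with hRdef
  have hRps : R.PosSemidef := (open scoped MatrixOrder in (CFC.sqrt_nonneg S⁻¹).posSemidef)
  have hRsymm : Rᵀ = R := by
    rw [← Matrix.conjTranspose_eq_transpose_of_trivial]; exact hRps.1
  have hRR : R * R = S⁻¹ := (open scoped MatrixOrder in CFC.sqrt_mul_sqrt_self S⁻¹ hA.posSemidef.nonneg)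
  have hKR : (S * R) * R = 1 := by rw [Matrix.mul_assoc, hRR, hSSi]
  have hRK : R * (S * R) = 1 := mul_eq_one_comm.mp hKR
  have hRSR : (R * S) * R = 1 := by rw [Matrix.mul_assoc]; exact hRK
  have hcomm : R * S = S * R := by
    calc R * S = (R * S) * 1 := (mul_one _).symm
      _ = (R * S) * (R * (S * R)) := by rw [hRK]
      _ = ((R * S) * R) * (S * R) := by simp only [Matrix.mul_assoc]
      _ = 1 * (S * R) := by rw [hRSR]
      _ = S * R := one_mul _
  have hKtK : (S * R)ᵀ * (S * R) = S := by
    rw [Matrix.transpose_mul, hRsymm, hSsymm]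
    calc R * S * (S * R) = (S * R) * (S * R) := by rw [hcomm]
      _ = S * (R * (S * R)) := by simp only [Matrix.mul_assoc]
      _ = S := by rw [hRK, mul_one]
  have hRtR : Rᵀ * R = S⁻¹ := by rw [hRsymm, hRR]
  have hRSigR : Rᵀ * (Sig * R) = S := by
    rw [hRsymm, ← hSS]
    calc R * (S * S * R) = (R * S) * (S * R) := by simp only [Matrix.mul_assoc]
      _ = (S * R) * (S * R) := by rw [hcomm]
      _ = S * (R * (S * R)) := by simp only [Matrix.mul_assoc]
      _ = S := by rw [hRK, mul_one]
  clear_value R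
  -- the transformed seminorm term
  set NL : EuclideanSpace ℝ (Fin d) → ℝ :=
    fun w => ρ₀ * N (Matrix.toEuclideanLin (S * R) w) with hNLdef
  have gnn : ∀ w, 0 ≤ NL w := fun w => mul_nonneg hρ (apply_nonneg N _)
  have gcont : Continuous NL := by
    apply continuous_const.mul
    exact (seminorm_continuous N).comp
      (Matrix.toEuclideanLin (S * R)).continuous_of_finiteDimensional
  have gconv : ∀ a b : EuclideanSpace ℝ (Fin d), ∀ t : ℝ, 0 < t → t < 1 →
      NL ((1-t) • a + t • b) ≤ (1-t) * NL a + t * NL b := by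
    intro a b t ht0 ht1
    have hlin : Matrix.toEuclideanLin (S * R) ((1-t) • a + t • b)
        = (1-t) • Matrix.toEuclideanLin (S * R) a + t • Matrix.toEuclideanLin (S * R) b := by
      rw [map_add, _root_.map_smul, _root_.map_smul]
    have h1 : N (Matrix.toEuclideanLin (S * R) ((1-t) • a + t • b))
        ≤ (1-t) * N (Matrix.toEuclideanLin (S * R) a)
          + t * N (Matrix.toEuclideanLin (S * R) b) := by
      rw [hlin]
      refine (map_add_le_add N _ _).trans ?_
      rw [map_smul_eq_mul, map_smul_eq_mul, Real.norm_eq_abs, Real.norm_eq_abs,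
        abs_of_pos ht0, abs_of_nonneg (by linarith : (0:ℝ) ≤ 1 - t)]
    calc NL ((1-t) • a + t • b)
        = ρ₀ * N (Matrix.toEuclideanLin (S * R) ((1-t) • a + t • b)) := by rw [hNLdef]
      _ ≤ ρ₀ * ((1-t) * N (Matrix.toEuclideanLin (S * R) a)
          + t * N (Matrix.toEuclideanLin (S * R) b)) := mul_le_mul_of_nonneg_left h1 hρ
      _ = (1-t) * NL a + t * NL b := by simp only [hNLdef]; ring
  -- the proximal map
  set P : EuclideanSpace ℝ (Fin d) → EuclideanSpace ℝ (Fin d) :=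
    fun z => Classical.choose (exists_min hκ gcont gnn z) with hPdef
  have hPmin : ∀ z y, κ₀/2 * ‖z - P z‖^2 + NL (P z) ≤ κ₀/2 * ‖z - y‖^2 + NL y :=
    fun z => Classical.choose_spec (exists_min hκ gcont gnn z)
  clear_value P
  have hPstrong : ∀ z y, κ₀/2 * ‖z - P z‖^2 + NL (P z) + κ₀/2 * ‖y - P z‖^2
      ≤ κ₀/2 * ‖z - y‖^2 + NL y :=
    fun z y => strong_min hκ gconv (hPmin z) y
  -- identification of f₀ with the Moreau envelope in transformed coordinates
  have hf₀e : f₀ = fun z => ⨅ w : EuclideanSpace ℝ (Fin d),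
      κ₀/2 * ‖Matrix.toEuclideanLin R z - w‖^2 + NL w := by
    funext z
    rw [hf₀ z]
    have hterm : ∀ y : EuclideanSpace ℝ (Fin d),
        (κ₀ / 2) * ((fun i => (z - y) i) ⬝ᵥ S⁻¹.mulVec (fun i => (z - y) i)) + ρ₀ * N y
        = κ₀/2 * ‖Matrix.toEuclideanLin R z - Matrix.toEuclideanLin R y‖^2
          + NL (Matrix.toEuclideanLin R y) := by
      intro y
      have h1 : ‖Matrix.toEuclideanLin R z - Matrix.toEuclideanLin R y‖^2
          = (fun i => (z - y) i) ⬝ᵥ S⁻¹.mulVec (fun i => (z - y) i) := by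
        rw [← map_sub, ← real_inner_self_eq_norm_sq, inner_toE, hRtR]
      have h2 : NL (Matrix.toEuclideanLin R y) = ρ₀ * N y := by
        simp only [hNLdef]
        rw [← toE_mul, hKR, toE_one]
      rw [h1, h2]
    rw [iInf_congr hterm]
    have hsurj : Function.Surjective
        (fun y : EuclideanSpace ℝ (Fin d) => Matrix.toEuclideanLin R y) := by
      intro w
      refine ⟨Matrix.toEuclideanLin (S * R) w, ?_⟩
      show Matrix.toEuclideanLin R (Matrix.toEuclideanLin (S * R) w) = w
      rw [← toE_mul, hRK, toE_one]
    exact hsurj.iInf_comp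
      (fun w => κ₀/2 * ‖Matrix.toEuclideanLin R z - w‖^2 + NL w)
  -- gradient of f₀
  have hgrad := envelope_hasGradient hκ gnn P hPstrong (Matrix.toEuclideanLin R x)
  have hrCL : HasFDerivAt (fun z : EuclideanSpace ℝ (Fin d) => Matrix.toEuclideanLin R z)
      (LinearMap.toContinuousLinearMap (Matrix.toEuclideanLin R)) x :=
    (LinearMap.toContinuousLinearMap (Matrix.toEuclideanLin R)).hasFDerivAt
  have h2 := (hgrad.hasFDerivAt.comp x hrCL)
  rw [show ((fun u : EuclideanSpace ℝ (Fin d) => ⨅ w : EuclideanSpace ℝ (Fin d),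
      κ₀/2 * ‖u - w‖^2 + NL w) ∘
      (fun z : EuclideanSpace ℝ (Fin d) => Matrix.toEuclideanLin R z)) = f₀ from by
    rw [hf₀e]; rfl] at h2
  have hgradf : HasGradientAt f₀
      (Matrix.toEuclideanLin R
        (κ₀ • (Matrix.toEuclideanLin R x - P (Matrix.toEuclideanLin R x)))) x := by
    rw [hasGradientAt_iff_hasFDerivAt]
    have hdual : InnerProductSpace.toDual ℝ (EuclideanSpace ℝ (Fin d))
        (Matrix.toEuclideanLin R
          (κ₀ • (Matrix.toEuclideanLin R x - P (Matrix.toEuclideanLin R x))))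
        = (InnerProductSpace.toDual ℝ (EuclideanSpace ℝ (Fin d))
            (κ₀ • (Matrix.toEuclideanLin R x - P (Matrix.toEuclideanLin R x)))).comp
          (LinearMap.toContinuousLinearMap (Matrix.toEuclideanLin R)) := by
      apply ContinuousLinearMap.ext
      intro h
      simp only [ContinuousLinearMap.comp_apply, InnerProductSpace.toDual_apply_apply]
      set u := κ₀ • (Matrix.toEuclideanLin R x - P (Matrix.toEuclideanLin R x))
      show (inner ℝ (Matrix.toEuclideanLin R u) h : ℝ)
        = inner ℝ u (Matrix.toEuclideanLin R h)
      rw [inner_eq_dot, inner_eq_dot]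
      show (R *ᵥ (fun i => u i)) ⬝ᵥ (fun i => h i)
        = (fun i => u i) ⬝ᵥ (R *ᵥ (fun i => h i))
      rw [dot_shift', hRsymm]
    rw [hdual]
    exact h2
  have hgradval : gradient f₀ x = Matrix.toEuclideanLin R
      (κ₀ • (Matrix.toEuclideanLin R x - P (Matrix.toEuclideanLin R x))) :=
    hgradf.gradient
  set rx : EuclideanSpace ℝ (Fin d) := Matrix.toEuclideanLin R x with hrx
  set q : EuclideanSpace ℝ (Fin d) := P rx with hq
  set w1 : EuclideanSpace ℝ (Fin d) := rx - q with hw1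
  -- pointwise dual bound from hsmall
  obtain ⟨c, hc0, hcle⟩ := seminorm_ge N hNdef
  have hbdd : BddAbove (Set.range fun y : {y : EuclideanSpace ℝ (Fin d) // N y ≤ 1} =>
      (S⁻¹.mulVec (fun i => x i)) ⬝ᵥ (fun i => (y : EuclideanSpace ℝ (Fin d)) i)) := by
    refine ⟨‖Matrix.toEuclideanLin S⁻¹ x‖ * (1/c), ?_⟩
    rintro val ⟨⟨y, hy⟩, rfl⟩
    have hval : (S⁻¹.mulVec (fun i => x i)) ⬝ᵥ (fun i => y i)
        = (inner ℝ (Matrix.toEuclideanLin S⁻¹ x) y : ℝ) := by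
      rw [inner_eq_dot]; rfl
    have h1 : (inner ℝ (Matrix.toEuclideanLin S⁻¹ x) y : ℝ)
        ≤ ‖Matrix.toEuclideanLin S⁻¹ x‖ * ‖y‖ := real_inner_le_norm _ _
    have h2 : ‖y‖ ≤ 1/c := by
      have h3 := hcle y
      rw [le_div_iff₀ hc0]
      calc ‖y‖ * c = c * ‖y‖ := mul_comm _ _
        _ ≤ N y := h3
        _ ≤ 1 := hy
    have h4 : 0 ≤ ‖Matrix.toEuclideanLin S⁻¹ x‖ := norm_nonneg _
    calc (S⁻¹.mulVec (fun i => x i)) ⬝ᵥ (fun i => y i)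
        = (inner ℝ (Matrix.toEuclideanLin S⁻¹ x) y : ℝ) := hval
      _ ≤ ‖Matrix.toEuclideanLin S⁻¹ x‖ * ‖y‖ := h1
      _ ≤ ‖Matrix.toEuclideanLin S⁻¹ x‖ * (1/c) := mul_le_mul_of_nonneg_left h2 h4
  have hsmallpt : ∀ y : EuclideanSpace ℝ (Fin d),
      τ * κ₀ * ((S⁻¹.mulVec (fun i => x i)) ⬝ᵥ (fun i => y i)) ≤ ρ₀ * N y := by
    intro y
    rcases (apply_nonneg N y).eq_or_lt with h0 | hpos
    · have hy0 : y = 0 := hNdef y h0.symm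
      subst hy0
      have hcoe : (fun i => (0 : EuclideanSpace ℝ (Fin d)) i) = (0 : Fin d → ℝ) := rfl
      rw [hcoe, dotProduct_zero]
      simp
    · have hNz : N ((N y)⁻¹ • y) ≤ 1 := by
        rw [map_smul_eq_mul, Real.norm_eq_abs, abs_of_pos (inv_pos.mpr hpos),
          inv_mul_cancel₀ hpos.ne']
      have hle := le_ciSup hbdd (⟨(N y)⁻¹ • y, hNz⟩ : {y : EuclideanSpace ℝ (Fin d) // N y ≤ 1})
      have hvz : (S⁻¹.mulVec (fun i => x i)) ⬝ᵥ
            (fun i => ((N y)⁻¹ • y : EuclideanSpace ℝ (Fin d)) i)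
          = (N y)⁻¹ * ((S⁻¹.mulVec (fun i => x i)) ⬝ᵥ (fun i => y i)) := by
        have hcoe2 : (fun i => ((N y)⁻¹ • y : EuclideanSpace ℝ (Fin d)) i)
            = (N y)⁻¹ • (fun i => y i) := rfl
        rw [hcoe2, dotProduct_smul, smul_eq_mul]
      have hτκ : (0:ℝ) < τ * κ₀ := mul_pos hτ0 hκ
      have h3 : τ * κ₀ * ((S⁻¹.mulVec (fun i => x i)) ⬝ᵥ
            (fun i => ((N y)⁻¹ • y : EuclideanSpace ℝ (Fin d)) i)) ≤ ρ₀ :=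
        le_of_lt (lt_of_le_of_lt (mul_le_mul_of_nonneg_left hle hτκ.le) hsmall)
      have h4 := mul_le_mul_of_nonneg_left h3 hpos.le
      rw [hvz] at h4
      calc τ * κ₀ * ((S⁻¹.mulVec (fun i => x i)) ⬝ᵥ (fun i => y i))
          = N y * (τ * κ₀ * ((N y)⁻¹ *
              ((S⁻¹.mulVec (fun i => x i)) ⬝ᵥ (fun i => y i)))) := by
            field_simp
        _ ≤ N y * ρ₀ := h4
        _ = ρ₀ * N y := mul_comm _ _
  -- the proximal point of the scaled center is 0
  have hz'x : Matrix.toEuclideanLin R (τ • x) = τ • rx := by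
    rw [_root_.map_smul, hrx]
  have h0min : ∀ w, κ₀/2 * ‖Matrix.toEuclideanLin R (τ • x) - 0‖^2 + NL 0
      ≤ κ₀/2 * ‖Matrix.toEuclideanLin R (τ • x) - w‖^2 + NL w := by
    intro w
    have hNL0 : NL 0 = 0 := by
      simp only [hNLdef, map_zero]
      simp
    have hkey : κ₀ * (inner ℝ (Matrix.toEuclideanLin R (τ • x)) w : ℝ) ≤ NL w := by
      have hwr : w = Matrix.toEuclideanLin R (Matrix.toEuclideanLin (S * R) w) := by
        rw [← toE_mul, hRK, toE_one]
      have hi : (inner ℝ (Matrix.toEuclideanLin R (τ • x)) w : ℝ)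
          = τ * ((S⁻¹.mulVec (fun i => x i)) ⬝ᵥ
              (fun i => (Matrix.toEuclideanLin (S * R) w) i)) := by
        conv_lhs => rw [hwr]
        rw [inner_toE, hRtR]
        have hτx : (fun i => (τ • x : EuclideanSpace ℝ (Fin d)) i) = τ • (fun i => x i) := rfl
        rw [hτx, smul_dotProduct, smul_eq_mul]
        congr 1
        rw [dot_shift, hAsymm]
      rw [hi]
      have h8 := hsmallpt (Matrix.toEuclideanLin (S * R) w)
      calc κ₀ * (τ * ((S⁻¹.mulVec (fun i => x i)) ⬝ᵥ
              (fun i => (Matrix.toEuclideanLin (S * R) w) i)))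
          = τ * κ₀ * ((S⁻¹.mulVec (fun i => x i)) ⬝ᵥ
              (fun i => (Matrix.toEuclideanLin (S * R) w) i)) := by ring
        _ ≤ ρ₀ * N (Matrix.toEuclideanLin (S * R) w) := h8
        _ = NL w := by rw [hNLdef]
    have hexp : κ₀/2 * ‖Matrix.toEuclideanLin R (τ • x) - w‖^2
        = κ₀/2 * ‖Matrix.toEuclideanLin R (τ • x)‖^2
          - κ₀ * (inner ℝ (Matrix.toEuclideanLin R (τ • x)) w : ℝ) + κ₀/2 * ‖w‖^2 := by
      rw [norm_sub_sq_real]; ring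
    have hwnn : (0:ℝ) ≤ κ₀/2 * ‖w‖^2 := by positivity
    rw [hNL0, sub_zero, hexp]
    linarith [hkey]
  have hP0 : P (Matrix.toEuclideanLin R (τ • x)) = 0 :=
    min_unique hκ (fun y => hPstrong (Matrix.toEuclideanLin R (τ • x)) y) h0min
  -- nonexpansiveness
  have hfirm := (firm hκ (fun y => hPstrong rx y)
    (fun y => hPstrong (Matrix.toEuclideanLin R (τ • x)) y)).2
  rw [hP0, sub_zero] at hfirm
  have hnonexp : ‖w1 - τ • rx‖ ≤ (1-τ) * ‖rx‖ := by
    have h5 : rx - Matrix.toEuclideanLin R (τ • x) = (1-τ) • rx := by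
      rw [hz'x, sub_smul, one_smul]
    calc ‖w1 - τ • rx‖ = ‖rx - q - Matrix.toEuclideanLin R (τ • x)‖ := by rw [hw1, hz'x]
      _ ≤ ‖rx - Matrix.toEuclideanLin R (τ • x)‖ := hfirm
      _ = (1-τ) * ‖rx‖ := by
          rw [h5, norm_smul, Real.norm_eq_abs, abs_of_nonneg (by linarith : (0:ℝ) ≤ 1-τ)]
  -- value of the quadratic form at the gradient
  have hKv : ∀ v : EuclideanSpace ℝ (Fin d),
      ‖Matrix.toEuclideanLin (S * R) v‖^2 = (fun i => v i) ⬝ᵥ S *ᵥ (fun i => v i) := by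
    intro v
    rw [← real_inner_self_eq_norm_sq, inner_toE, hKtK]
  have hGdot : (fun i => gradient f₀ x i) ⬝ᵥ Sig.mulVec (fun i => gradient f₀ x i)
      = (κ₀ * ‖Matrix.toEuclideanLin (S * R) w1‖)^2 := by
    have hbr : (fun i => gradient f₀ x i) ⬝ᵥ Sig.mulVec (fun i => gradient f₀ x i)
        = (inner ℝ (gradient f₀ x) (Matrix.toEuclideanLin Sig (gradient f₀ x)) : ℝ) := by
      rw [inner_eq_dot]; rfl
    rw [hbr, hgradval, _root_.map_smul, real_inner_smul_left, _root_.map_smul,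
      real_inner_smul_right, ← toE_mul, inner_toE, hRSigR]
    rw [← hKv w1]
    ring
  have hLHS : Real.sqrt ((fun i => gradient f₀ x i) ⬝ᵥ Sig.mulVec (fun i => gradient f₀ x i))
      = κ₀ * ‖Matrix.toEuclideanLin (S * R) w1‖ := by
    rw [hGdot, Real.sqrt_sq (by positivity)]
  -- eigenvalue bound
  set lam : ℝ := ⨆ i, hSig.1.eigenvalues i with hlam
  have hlamnn : 0 ≤ lam := by
    rcases isEmpty_or_nonempty (Fin d) with he | hne
    · rw [hlam, Real.iSup_of_isEmpty]
    · obtain ⟨i⟩ := hne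
      exact le_trans (hSig.eigenvalues_pos i).le (le_ciSup ((Set.finite_range _).bddAbove) i)
  have hKvle : ∀ v : EuclideanSpace ℝ (Fin d),
      ‖Matrix.toEuclideanLin (S * R) v‖ ≤ lam ^ ((1:ℝ)/4) * ‖v‖ := by
    intro v
    have hSv2 : ‖Matrix.toEuclideanLin S v‖^2 ≤ lam * ‖v‖^2 := by
      have hbr2 : ‖Matrix.toEuclideanLin S v‖^2 = (fun i => v i) ⬝ᵥ Sig *ᵥ (fun i => v i) := by
        rw [← real_inner_self_eq_norm_sq, inner_toE, hSsymm, hSS]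
      rw [hbr2, hlam]
      exact rayleigh hSig.1 v
    have hSvle : ‖Matrix.toEuclideanLin S v‖ ≤ Real.sqrt lam * ‖v‖ := by
      calc ‖Matrix.toEuclideanLin S v‖ = Real.sqrt (‖Matrix.toEuclideanLin S v‖^2) :=
            (Real.sqrt_sq (norm_nonneg _)).symm
        _ ≤ Real.sqrt (lam * ‖v‖^2) := Real.sqrt_le_sqrt hSv2
        _ = Real.sqrt lam * ‖v‖ := by
            rw [Real.sqrt_mul hlamnn, Real.sqrt_sq (norm_nonneg _)]
    have hdot2 : ‖Matrix.toEuclideanLin (S * R) v‖^2 ≤ Real.sqrt lam * ‖v‖^2 := by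
      rw [hKv v]
      have hbr3 : (fun i => v i) ⬝ᵥ S *ᵥ (fun i => v i)
          = (inner ℝ v (Matrix.toEuclideanLin S v) : ℝ) := by
        rw [inner_eq_dot]; rfl
      rw [hbr3]
      calc (inner ℝ v (Matrix.toEuclideanLin S v) : ℝ)
          ≤ ‖v‖ * ‖Matrix.toEuclideanLin S v‖ := real_inner_le_norm _ _
        _ ≤ ‖v‖ * (Real.sqrt lam * ‖v‖) := mul_le_mul_of_nonneg_left hSvle (norm_nonneg _)
        _ = Real.sqrt lam * ‖v‖^2 := by ring
    calc ‖Matrix.toEuclideanLin (S * R) v‖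
        = Real.sqrt (‖Matrix.toEuclideanLin (S * R) v‖^2) := (Real.sqrt_sq (norm_nonneg _)).symm
      _ ≤ Real.sqrt (Real.sqrt lam * ‖v‖^2) := Real.sqrt_le_sqrt hdot2
      _ = Real.sqrt (Real.sqrt lam) * ‖v‖ := by
          rw [Real.sqrt_mul (Real.sqrt_nonneg _), Real.sqrt_sq (norm_nonneg _)]
      _ = lam ^ ((1:ℝ)/4) * ‖v‖ := by
          congr 1
          rw [show ((1:ℝ)/4) = (1/2) * (1/2) by norm_num, Real.rpow_mul hlamnn,
            ← Real.sqrt_eq_rpow, ← Real.sqrt_eq_rpow]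
  -- right-hand side norm identity
  have hRHSsqrt : Real.sqrt ((S⁻¹.mulVec fun i => x i) ⬝ᵥ S.mulVec (S⁻¹.mulVec fun i => x i))
      = ‖rx‖ := by
    have h7 : (S⁻¹.mulVec fun i => x i) ⬝ᵥ S.mulVec (S⁻¹.mulVec fun i => x i) = ‖rx‖^2 := by
      rw [Matrix.mulVec_mulVec, hSSi, Matrix.one_mulVec]
      rw [dot_shift', hAsymm]
      rw [hrx, ← real_inner_self_eq_norm_sq, inner_toE, hRtR]
    rw [h7, Real.sqrt_sq (norm_nonneg _)]
  -- final assembly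
  have hsplit : Matrix.toEuclideanLin (S * R) w1
      = Matrix.toEuclideanLin (S * R) (w1 - τ • rx) + τ • x := by
    have h6 : Matrix.toEuclideanLin (S * R) (τ • rx) = τ • x := by
      rw [_root_.map_smul, hrx, ← toE_mul, hKR, toE_one]
    rw [← h6, ← map_add]
    congr 1
    abel
  have hτx2 : ‖Matrix.toEuclideanLin (S * R) w1‖
      ≤ lam ^ ((1:ℝ)/4) * ((1-τ) * ‖rx‖) + τ * ‖x‖ := by
    rw [hsplit]
    refine (norm_add_le _ _).trans ?_
    have h12 := hKvle (w1 - τ • rx)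
    have h9 : ‖τ • x‖ = τ * ‖x‖ := by
      rw [norm_smul, Real.norm_eq_abs, abs_of_pos hτ0]
    have h11 : lam ^ ((1:ℝ)/4) * ‖w1 - τ • rx‖ ≤ lam ^ ((1:ℝ)/4) * ((1-τ) * ‖rx‖) :=
      mul_le_mul_of_nonneg_left hnonexp (by positivity)
    rw [h9]
    linarith [h12, h11]
  rw [hLHS, hRHSsqrt]
  calc κ₀ * ‖Matrix.toEuclideanLin (S * R) w1‖
      ≤ κ₀ * (lam ^ ((1:ℝ)/4) * ((1-τ) * ‖rx‖) + τ * ‖x‖) :=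
        mul_le_mul_of_nonneg_left hτx2 hκ.le
    _ = lam ^ ((1:ℝ)/4) * (1 - τ) * κ₀ * ‖rx‖ + τ * κ₀ * ‖x‖ := by ring
end
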